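/- Under the integrability hypotheses of the previous statement, if additionally g' is nonnegative everywhere and γ_s(ω) ≤ δ holds μ-almost everywhere, then the expected concentration change satisfies Δ_s ≤ 0: the expected SGD update shrinks the weighted attributions over the feature subset s. -/

import Mathlib

/-!
Multiplying the `i`-th coordinate of the expected update by `w i` and summing over `s` turns
`w i * sign (w i)` into `|w i|`, so pointwise in `ω` the weighted sum factors as
`g'(⋯) * (c * ∑_{i ∈ s} w i z_i - δ * ∑_{i ∈ s} |w i|)`. The first factor is nonnegative and the
second is nonpositive almost everywhere by the bound on `γ_s`; integrating and dividing by the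
positive normaliser gives `Δ_s ≤ 0`.
-/

open MeasureTheory

theorem Real.self_mul_sign (x : ℝ) : x * Real.sign x = |x| := by
  rcases lt_trichotomy x 0 with h | rfl | h
  · rw [Real.sign_of_neg h, abs_of_neg h]; ring
  · simp
  · rw [Real.sign_of_pos h, abs_of_pos h]; ring

section WeightedUpdate

variable {ι : Type*} (s : Finset ι) (w z : ι → ℝ)

theorem sum_mul_mul_sub_sign_eq (G c δ : ℝ) :
    ∑ i ∈ s, w i * (G * (c * z i - δ * Real.sign (w i)))
      = G * (c * ∑ i ∈ s, w i * z i - δ * ∑ i ∈ s, |w i|) := by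
  simp_rw [Finset.mul_sum, ← Finset.sum_sub_distrib, Finset.mul_sum]
  refine Finset.sum_congr rfl fun i _ => ?_
  linear_combination (-(G * δ)) * Real.self_mul_sign (w i)

theorem sum_mul_mul_sub_sign_nonpos {G c δ : ℝ} (hG : 0 ≤ G)
    (h : c * ∑ i ∈ s, w i * z i ≤ δ * ∑ i ∈ s, |w i|) :
    ∑ i ∈ s, w i * (G * (c * z i - δ * Real.sign (w i))) ≤ 0 := by
  rw [sum_mul_mul_sub_sign_eq]
  exact mul_nonpos_of_nonneg_of_nonpos hG (sub_nonpos.mpr h)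

end WeightedUpdate

theorem expected_concentration_change_nonpos_general (n : ℕ)
    {Ω : Type*} [MeasurableSpace Ω] (μ : Measure Ω)
    (z : Ω → Fin n → ℝ) (g : ℝ → ℝ)
    (hg' : ∀ t : ℝ, 0 ≤ deriv g t)
    (w : Fin n → ℝ) (c δ : ℝ)
    (s : Finset (Fin n)) (hs : 0 < ∑ i ∈ s, |w i|)
    (hint : ∀ i : Fin n, Integrable
      (fun ω => deriv g (δ * ∑ j, |w j| - c * ∑ j, z ω j * w j)
        * (c * z ω i - δ * Real.sign (w i))) μ)
    (hγ : ∀ᵐ ω ∂μ, c * (∑ i ∈ s, w i * z ω i) / (∑ i ∈ s, |w i|) ≤ δ) :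
    (∑ i ∈ s, w i * ∫ ω, deriv g (δ * ∑ j, |w j| - c * ∑ j, z ω j * w j)
        * (c * z ω i - δ * Real.sign (w i)) ∂μ) / (∑ i ∈ s, |w i|) ≤ 0 := by
  refine div_nonpos_of_nonpos_of_nonneg ?_ hs.le
  simp_rw [← integral_const_mul]
  rw [← integral_finsetSum _ fun i _ => (hint i).const_mul (w i)]
  refine integral_nonpos_of_ae ?_
  filter_upwards [hγ] with ω hω
  exact sum_mul_mul_sub_sign_nonpos s w (z ω) (hg' _)
    (by rw [div_le_iff₀ hs] at hω; linarith)

/-- Under the integrability hypotheses, if `g' ≥ 0` everywhere and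
`γ_s ω ≤ δ` holds `μ`-almost everywhere, then the expected concentration change
satisfies `Δ_s ≤ 0`: the expected SGD update shrinks the weighted attributions
over the feature subset `s`. -/
theorem expected_concentration_change_nonpos (n : ℕ)
    {Ω : Type*} [MeasurableSpace Ω] (μ : Measure Ω) [IsProbabilityMeasure μ]
    (z : Ω → Fin n → ℝ) (g : ℝ → ℝ) (hg : Differentiable ℝ g)
    (hg' : ∀ t : ℝ, 0 ≤ deriv g t)
    (w : Fin n → ℝ) (c δ : ℝ) (hδ : 0 ≤ δ)
    (s : Finset (Fin n)) (hs : 0 < ∑ i ∈ s, |w i|)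
    (hint : ∀ i : Fin n, Integrable
      (fun ω => deriv g (δ * ∑ j, |w j| - c * ∑ j, z ω j * w j)
        * (c * z ω i - δ * Real.sign (w i))) μ)
    (hγ : ∀ᵐ ω ∂μ, c * (∑ i ∈ s, w i * z ω i) / (∑ i ∈ s, |w i|) ≤ δ) :
    (∑ i ∈ s, w i * ∫ ω, deriv g (δ * ∑ j, |w j| - c * ∑ j, z ω j * w j)
        * (c * z ω i - δ * Real.sign (w i)) ∂μ) / (∑ i ∈ s, |w i|) ≤ 0 :=
  expected_concentration_change_nonpos_general n μ z g hg' w c δ s hs hint hγ
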